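/- arXiv:1601.07079 — 3 statements merged into one kernel-verified Lean document; each statement's English description precedes it below -/
import Mathlib

section
/- Let K : ℝ → ℝ be continuous, let f₁ : ℝ → ℝ be twice differentiable with f₁''(t) + K(t)·f₁(t) = 0 for all t, f₁(0) = 1 and f₁'(0) = 0. Let t₀ > 0 and suppose f₁(s) ≠ 0 for all s ∈ [0, t₀), f₁(t₀) = 0 and f₁'(t₀) ≠ 0. Then the function t ↦ f₁(t)·∫₀ᵗ f₁(s)⁻² ds tends to −1/f₁'(t₀) as t → t₀ from the left. -/
/-!
Near a simple zero of `f`, where `f'` does not vanish, the Jacobi equation `f'' = -K f` gives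
`(f ^ 2)⁻¹ = K / f' ^ 2 - ((f f')⁻¹)'`. Integrating, `f t * ∫₀ᵗ (f ^ 2)⁻¹` is `f t` times a
quantity with a finite limit at `t₀`, minus `(f' t)⁻¹`; the first term tends to `0` and the second
to `(f' t₀)⁻¹`.
-/

open Set Filter Topology MeasureTheory intervalIntegral

theorem exists_forall_Icc_ne_zero_of_continuousAt {g : ℝ → ℝ} {b t₀ : ℝ} (hb : b < t₀)
    (hg : ContinuousAt g t₀) (h : g t₀ ≠ 0) :
    ∃ a, b ≤ a ∧ a < t₀ ∧ ∀ s ∈ Icc a t₀, g s ≠ 0 := by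
  obtain ⟨l, hl, hsub⟩ :=
    mem_nhdsLE_iff_exists_Icc_subset.mp (mem_nhdsWithin_of_mem_nhds (hg.eventually_ne h))
  exact ⟨max l b, le_max_right _ _, max_lt hl hb,
    fun s hs => hsub ⟨(le_max_left _ _).trans hs.1, hs.2⟩⟩

theorem tendsto_integral_nhdsLT_of_continuousOn {v : ℝ → ℝ} {a b : ℝ} (hab : a < b)
    (hv : ContinuousOn v (Icc a b)) :
    Tendsto (fun t => ∫ s in a..t, v s) (𝓝[<] b) (𝓝 (∫ s in a..b, v s)) := by
  have hprim := continuousOn_primitive_interval (μ := volume)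
    (uIcc_of_le hab.le ▸ hv.integrableOn_Icc)
  rw [uIcc_of_le hab.le] at hprim
  exact (hprim b ⟨hab.le, le_rfl⟩).tendsto.mono_left (nhdsWithin_le_of_mem (Icc_mem_nhdsLT hab))

section Jacobi

variable {K f : ℝ → ℝ}

theorem hasDerivAt_inv_mul_deriv_of_jacobi {s : ℝ} (hf : DifferentiableAt ℝ f s)
    (hf' : HasDerivAt (deriv f) (-(K s * f s)) s) (hs : f s ≠ 0) (hs' : deriv f s ≠ 0) :
    HasDerivAt (fun x => (f x * deriv f x)⁻¹) (K s / deriv f s ^ 2 - (f s ^ 2)⁻¹) s := by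
  refine ((hf.hasDerivAt.mul hf').inv (mul_ne_zero hs hs')).congr_deriv ?_
  simp only [Pi.mul_apply]
  field_simp
  ring

variable (hf : Differentiable ℝ f) (hf' : Differentiable ℝ (deriv f))
  (hode : ∀ s, deriv (deriv f) s + K s * f s = 0)
include hf hf' hode

theorem integral_inv_sq_eq_of_jacobi {a t : ℝ} (hat : a ≤ t) (hK : ContinuousOn K (Icc a t))
    (hne : ∀ s ∈ Icc a t, f s ≠ 0) (hne' : ∀ s ∈ Icc a t, deriv f s ≠ 0) :
    ∫ s in a..t, (f s ^ 2)⁻¹ =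
      (∫ s in a..t, K s / deriv f s ^ 2) + (f a * deriv f a)⁻¹ - (f t * deriv f t)⁻¹ := by
  have hint₁ : IntervalIntegrable (fun s => (f s ^ 2)⁻¹) volume a t :=
    ContinuousOn.intervalIntegrable <| by
      rw [uIcc_of_le hat]
      exact (hf.continuous.pow 2).continuousOn.inv₀ fun s hs => pow_ne_zero 2 (hne s hs)
  have hint₂ : IntervalIntegrable (fun s => K s / deriv f s ^ 2) volume a t :=
    ContinuousOn.intervalIntegrable <| by
      rw [uIcc_of_le hat]
      exact hK.div (hf'.continuous.pow 2).continuousOn fun s hs => pow_ne_zero 2 (hne' s hs)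
  have hFTC := integral_eq_sub_of_hasDerivAt (fun s hs => by
      rw [uIcc_of_le hat] at hs
      exact hasDerivAt_inv_mul_deriv_of_jacobi (hf s)
        ((hf' s).hasDerivAt.congr_deriv (by linarith [hode s])) (hne s hs) (hne' s hs))
    (hint₂.sub hint₁)
  rw [integral_sub hint₂ hint₁] at hFTC
  linarith

theorem mul_integral_inv_sq_eq_of_jacobi {c a t : ℝ} (hca : c ≤ a) (hat : a ≤ t)
    (hK : ContinuousOn K (Icc a t)) (hne : ∀ s ∈ Icc c t, f s ≠ 0)
    (hne' : ∀ s ∈ Icc a t, deriv f s ≠ 0) :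
    f t * ∫ s in c..t, (f s ^ 2)⁻¹ =
      f t * ((∫ s in c..a, (f s ^ 2)⁻¹) + (f a * deriv f a)⁻¹ +
        ∫ s in a..t, K s / deriv f s ^ 2) - (deriv f t)⁻¹ := by
  have hint : ∀ b ∈ Icc c t, IntervalIntegrable (fun s => (f s ^ 2)⁻¹) volume c b :=
    fun b hb => ContinuousOn.intervalIntegrable <| by
      rw [uIcc_of_le hb.1]
      exact (hf.continuous.pow 2).continuousOn.inv₀ fun s hs =>
        pow_ne_zero 2 (hne s ⟨hs.1, hs.2.trans hb.2⟩)
  have hint_a := hint a ⟨hca, hat⟩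
  rw [← integral_add_adjacent_intervals hint_a
      (hint_a.symm.trans (hint t ⟨hca.trans hat, le_rfl⟩)),
    integral_inv_sq_eq_of_jacobi hf hf' hode hat hK
      (fun s hs => hne s ⟨hca.trans hs.1, hs.2⟩) hne']
  have hcancel : f t * (f t * deriv f t)⁻¹ = (deriv f t)⁻¹ := by
    rw [mul_inv, ← mul_assoc, mul_inv_cancel₀ (hne t ⟨hca.trans hat, le_rfl⟩), one_mul]
  linear_combination -hcancel

end Jacobi

theorem stmt_3_general (K f₁ : ℝ → ℝ) (hK : Continuous K)
    (hf : Differentiable ℝ f₁) (hf' : Differentiable ℝ (deriv f₁))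
    (hode : ∀ t, deriv (deriv f₁) t + K t * f₁ t = 0)
    (t₀ : ℝ) (ht₀ : 0 < t₀)
    (hne : ∀ s ∈ Set.Ico (0 : ℝ) t₀, f₁ s ≠ 0)
    (hz : f₁ t₀ = 0) (hz' : deriv f₁ t₀ ≠ 0) :
    Filter.Tendsto (fun t => f₁ t * ∫ s in (0 : ℝ)..t, ((f₁ s) ^ 2)⁻¹)
      (nhdsWithin t₀ (Set.Iio t₀)) (nhds (-(1 / deriv f₁ t₀))) := by
  obtain ⟨a, ha, hat, hderiv⟩ :=
    exists_forall_Icc_ne_zero_of_continuousAt ht₀ hf'.continuous.continuousAt hz'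
  refine Tendsto.congr' (eventuallyEq_of_mem (Ioo_mem_nhdsLT hat) fun t ht =>
    (mul_integral_inv_sq_eq_of_jacobi hf hf' hode ha ht.1.le hK.continuousOn
      (fun s hs => hne s ⟨hs.1, hs.2.trans_lt ht.2⟩)
      (fun s hs => hderiv s ⟨hs.1, hs.2.trans ht.2.le⟩)).symm) ?_
  have hv := tendsto_integral_nhdsLT_of_continuousOn (v := fun s => K s / deriv f₁ s ^ 2) hat
    (hK.continuousOn.div (hf'.continuous.pow 2).continuousOn fun s hs =>
      pow_ne_zero 2 (hderiv s hs))
  have hf₁ : Tendsto f₁ (𝓝[<] t₀) (𝓝 0) :=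
    hz ▸ hf.continuous.continuousAt.mono_left nhdsWithin_le_nhds
  have hinv : Tendsto (fun t => (deriv f₁ t)⁻¹) (𝓝[<] t₀) (𝓝 (deriv f₁ t₀)⁻¹) :=
    (hf'.continuous.continuousAt.mono_left nhdsWithin_le_nhds).inv₀ hz'
  convert (hf₁.mul (tendsto_const_nhds.add hv)).sub hinv using 2
  rw [zero_mul, zero_sub, one_div]

/-- The reduction-of-order formula `t ↦ f₁ t * ∫₀ᵗ f₁(s)⁻² ds`
has a removable singularity at a simple zero `t₀` of `f₁`: it tends to
`-1/f₁'(t₀)` as `t → t₀⁻`. -/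
theorem stmt_3 (K f₁ : ℝ → ℝ) (hK : Continuous K)
    (hf : Differentiable ℝ f₁) (hf' : Differentiable ℝ (deriv f₁))
    (hode : ∀ t, deriv (deriv f₁) t + K t * f₁ t = 0)
    (h0 : f₁ 0 = 1) (h0' : deriv f₁ 0 = 0)
    (t₀ : ℝ) (ht₀ : 0 < t₀)
    (hne : ∀ s ∈ Set.Ico (0 : ℝ) t₀, f₁ s ≠ 0)
    (hz : f₁ t₀ = 0) (hz' : deriv f₁ t₀ ≠ 0) :
    Filter.Tendsto (fun t => f₁ t * ∫ s in (0 : ℝ)..t, ((f₁ s) ^ 2)⁻¹)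
      (nhdsWithin t₀ (Set.Iio t₀)) (nhds (-(1 / deriv f₁ t₀))) :=
  stmt_3_general K f₁ hK hf hf' hode t₀ ht₀ hne hz hz'
end

section
/- Let T > 0, let K : ℝ → ℝ be continuous, and let f₁ : ℝ → ℝ be twice differentiable with f₁''(t) + K(t)·f₁(t) = 0 for all t, f₁(0) = 1, f₁'(0) = 0, f₁(s) > 0 for all s ∈ [0, T], and f₁'(T) ≠ 0. Let 0 < ε < T/2 and let h : ℝ → ℝ be continuous with h(s) ≥ 0 for all s, h(s) = 0 for s ∉ (T − 2ε, T − ε), and h(s*) > 0 for some s* ∈ (T − 2ε, T − ε). Then f₁(T) + 1/f₁(T) + f₁'(T)·∫₀ᵀ (f₁(s) + h(s))⁻² ds ≠ f₁(T) + 1/f₁(T) + f₁'(T)·∫₀ᵀ f₁(s)⁻² ds; indeed the difference of the two expressions equals f₁'(T)·∫_{T−2ε}^{T−ε} ((f₁(s) + h(s))⁻² − f₁(s)⁻²) ds, which is nonzero. -/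
open Set intervalIntegral

/-- A nonnegative bump perturbation `h` of a positive solution
`f₁`, supported in `(T - 2ε, T - ε)` and positive somewhere there, changes
the trace `f₁(T) + 1/f₁(T) + f₁'(T) ∫₀ᵀ f₁(s)⁻² ds` of the linearized
Poincaré return map; the difference equals
`f₁'(T) ∫_{T-2ε}^{T-ε} ((f₁+h)(s)⁻² - f₁(s)⁻²) ds ≠ 0`. -/
theorem stmt_7 (T : ℝ) (hT : 0 < T) (K f₁ : ℝ → ℝ) (hK : Continuous K)
    (hf : Differentiable ℝ f₁) (hf' : Differentiable ℝ (deriv f₁))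
    (hode : ∀ t, deriv (deriv f₁) t + K t * f₁ t = 0)
    (h0 : f₁ 0 = 1) (h0' : deriv f₁ 0 = 0)
    (hpos : ∀ s ∈ Set.Icc (0 : ℝ) T, 0 < f₁ s)
    (hT' : deriv f₁ T ≠ 0)
    (ε : ℝ) (hε : 0 < ε) (hεT : ε < T / 2)
    (h : ℝ → ℝ) (hh : Continuous h) (hh0 : ∀ s, 0 ≤ h s)
    (hsupp : ∀ s, s ∉ Set.Ioo (T - 2 * ε) (T - ε) → h s = 0)
    (hsome : ∃ s ∈ Set.Ioo (T - 2 * ε) (T - ε), 0 < h s) :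
    f₁ T + 1 / f₁ T + deriv f₁ T * (∫ s in (0 : ℝ)..T, ((f₁ s + h s) ^ 2)⁻¹)
      ≠ f₁ T + 1 / f₁ T + deriv f₁ T * (∫ s in (0 : ℝ)..T, ((f₁ s) ^ 2)⁻¹) ∧
    (f₁ T + 1 / f₁ T + deriv f₁ T * (∫ s in (0 : ℝ)..T, ((f₁ s + h s) ^ 2)⁻¹))
        - (f₁ T + 1 / f₁ T + deriv f₁ T * (∫ s in (0 : ℝ)..T, ((f₁ s) ^ 2)⁻¹))
      = deriv f₁ T *
          ∫ s in (T - 2 * ε)..(T - ε), (((f₁ s + h s) ^ 2)⁻¹ - ((f₁ s) ^ 2)⁻¹) ∧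
    deriv f₁ T *
        (∫ s in (T - 2 * ε)..(T - ε), (((f₁ s + h s) ^ 2)⁻¹ - ((f₁ s) ^ 2)⁻¹))
      ≠ 0 := by
  set a := T - 2 * ε with ha_def
  set b := T - ε with hb_def
  have ha0 : 0 < a := by simp only [ha_def]; linarith
  have hab : a < b := by simp only [ha_def, hb_def]; linarith
  have hbT : b < T := by simp only [hb_def]; linarith
  -- positivity on subintervals
  have hpos' : ∀ s ∈ Icc (0:ℝ) T, 0 < f₁ s + h s := fun s hs =>
    lt_of_lt_of_le (hpos s hs) (le_add_of_nonneg_right (hh0 s))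
  -- continuity of the two integrands on Icc 0 T
  have hcf : ContinuousOn (fun s => ((f₁ s) ^ 2)⁻¹) (Icc 0 T) := by
    apply ContinuousOn.inv₀
    · exact ((hf.continuous.pow 2).continuousOn)
    · intro s hs; exact pow_ne_zero 2 (hpos s hs).ne'
  have hcg : ContinuousOn (fun s => ((f₁ s + h s) ^ 2)⁻¹) (Icc 0 T) := by
    apply ContinuousOn.inv₀
    · exact (((hf.continuous.add hh).pow 2).continuousOn)
    · intro s hs; exact pow_ne_zero 2 (hpos' s hs).ne'
  have hsub : Icc a b ⊆ Icc (0:ℝ) T := Icc_subset_Icc ha0.le hbT.le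
  have hsub1 : Icc (0:ℝ) a ⊆ Icc (0:ℝ) T := Icc_subset_Icc le_rfl (by linarith)
  have hsub2 : Icc b T ⊆ Icc (0:ℝ) T := Icc_subset_Icc (by linarith) le_rfl
  -- integrability pieces
  have hif1 : IntervalIntegrable (fun s => ((f₁ s) ^ 2)⁻¹) MeasureTheory.volume 0 a :=
    (hcf.mono hsub1).intervalIntegrable_of_Icc ha0.le
  have hif2 : IntervalIntegrable (fun s => ((f₁ s) ^ 2)⁻¹) MeasureTheory.volume a b :=
    (hcf.mono hsub).intervalIntegrable_of_Icc hab.le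
  have hif3 : IntervalIntegrable (fun s => ((f₁ s) ^ 2)⁻¹) MeasureTheory.volume b T :=
    (hcf.mono hsub2).intervalIntegrable_of_Icc hbT.le
  have hig1 : IntervalIntegrable (fun s => ((f₁ s + h s) ^ 2)⁻¹) MeasureTheory.volume 0 a :=
    (hcg.mono hsub1).intervalIntegrable_of_Icc ha0.le
  have hig2 : IntervalIntegrable (fun s => ((f₁ s + h s) ^ 2)⁻¹) MeasureTheory.volume a b :=
    (hcg.mono hsub).intervalIntegrable_of_Icc hab.le
  have hig3 : IntervalIntegrable (fun s => ((f₁ s + h s) ^ 2)⁻¹) MeasureTheory.volume b T :=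
    (hcg.mono hsub2).intervalIntegrable_of_Icc hbT.le
  -- integrands agree off the bump
  have heq1 : EqOn (fun s => ((f₁ s + h s) ^ 2)⁻¹) (fun s => ((f₁ s) ^ 2)⁻¹) (uIcc 0 a) := by
    intro s hs
    rw [uIcc_of_le ha0.le] at hs
    have : h s = 0 := hsupp s (by
      intro hmem; exact absurd hs.2 (not_le.mpr hmem.1))
    simp [this]
  have heq3 : EqOn (fun s => ((f₁ s + h s) ^ 2)⁻¹) (fun s => ((f₁ s) ^ 2)⁻¹) (uIcc b T) := by
    intro s hs
    rw [uIcc_of_le hbT.le] at hs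
    have : h s = 0 := hsupp s (by
      intro hmem; exact absurd hs.1 (not_le.mpr hmem.2))
    simp [this]
  -- difference of integrals over [0,T]
  have hsplitf : (∫ s in (0:ℝ)..T, ((f₁ s) ^ 2)⁻¹)
      = (∫ s in (0:ℝ)..a, ((f₁ s) ^ 2)⁻¹) + (∫ s in a..b, ((f₁ s) ^ 2)⁻¹)
        + (∫ s in b..T, ((f₁ s) ^ 2)⁻¹) := by
    rw [integral_add_adjacent_intervals hif1 hif2,
      integral_add_adjacent_intervals (hif1.trans hif2) hif3]
  have hsplitg : (∫ s in (0:ℝ)..T, ((f₁ s + h s) ^ 2)⁻¹)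
      = (∫ s in (0:ℝ)..a, ((f₁ s + h s) ^ 2)⁻¹) + (∫ s in a..b, ((f₁ s + h s) ^ 2)⁻¹)
        + (∫ s in b..T, ((f₁ s + h s) ^ 2)⁻¹) := by
    rw [integral_add_adjacent_intervals hig1 hig2,
      integral_add_adjacent_intervals (hig1.trans hig2) hig3]
  have hc1 : (∫ s in (0:ℝ)..a, ((f₁ s + h s) ^ 2)⁻¹) = ∫ s in (0:ℝ)..a, ((f₁ s) ^ 2)⁻¹ :=
    integral_congr heq1
  have hc3 : (∫ s in b..T, ((f₁ s + h s) ^ 2)⁻¹) = ∫ s in b..T, ((f₁ s) ^ 2)⁻¹ :=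
    integral_congr heq3
  have hdiff : (∫ s in (0:ℝ)..T, ((f₁ s + h s) ^ 2)⁻¹) - (∫ s in (0:ℝ)..T, ((f₁ s) ^ 2)⁻¹)
      = ∫ s in a..b, (((f₁ s + h s) ^ 2)⁻¹ - ((f₁ s) ^ 2)⁻¹) := by
    rw [integral_sub hig2 hif2, hsplitf, hsplitg, hc1, hc3]; ring
  -- strict inequality on the bump interval
  have hlt : (∫ s in a..b, ((f₁ s + h s) ^ 2)⁻¹) < ∫ s in a..b, ((f₁ s) ^ 2)⁻¹ := by
    apply integral_lt_integral_of_continuousOn_of_le_of_exists_lt hab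
      (hcg.mono hsub) (hcf.mono hsub)
    · intro s hs
      have hs' : s ∈ Icc (0:ℝ) T := hsub ⟨hs.1.le, hs.2⟩
      have h1 : 0 < f₁ s := hpos s hs'
      have : f₁ s ^ 2 ≤ (f₁ s + h s) ^ 2 := by nlinarith [hh0 s]
      exact inv_anti₀ (by positivity) this
    · obtain ⟨c, hc, hcpos⟩ := hsome
      refine ⟨c, ⟨hc.1.le, hc.2.le⟩, ?_⟩
      have hc' : c ∈ Icc (0:ℝ) T := hsub ⟨hc.1.le, hc.2.le⟩
      have h1 : 0 < f₁ c := hpos c hc'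
      apply inv_strictAnti₀ (by positivity)
      nlinarith
  have hint_ne : (∫ s in a..b, (((f₁ s + h s) ^ 2)⁻¹ - ((f₁ s) ^ 2)⁻¹)) ≠ 0 := by
    rw [integral_sub hig2 hif2]
    exact ne_of_lt (sub_neg.mpr hlt)
  refine ⟨?_, ?_, mul_ne_zero hT' hint_ne⟩
  · intro hcontra
    apply mul_ne_zero hT' hint_ne
    have : (∫ s in (0:ℝ)..T, ((f₁ s + h s) ^ 2)⁻¹) = ∫ s in (0:ℝ)..T, ((f₁ s) ^ 2)⁻¹ :=
      mul_left_cancel₀ hT' (by linarith)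
    rw [← hdiff, this, sub_self, mul_zero]
  · rw [← hdiff]; ring
end

section
/- Let E be a real normed vector space, let F : E → E be a map differentiable at a point p with F(p) = p, and let (xₖ) be a sequence in E with F(xₖ) = xₖ for all k, xₖ ≠ p for all k, and xₖ → p. Suppose the unit vectors (xₖ − p)/‖xₖ − p‖ converge to some v ∈ E. Then ‖v‖ = 1 and the Fréchet derivative A = DF(p) satisfies A v = v; in particular 1 is an eigenvalue of DF(p). -/
/-- If a fixed point `p` of a map `F` differentiable at `p` is
accumulated by other fixed points `xₖ → p` whose unit directions
`(xₖ - p)/‖xₖ - p‖` converge to `v`, then `‖v‖ = 1` and `v` is fixed by the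
derivative `A = DF(p)`; in particular `1` is an eigenvalue of `DF(p)`. -/
theorem stmt_8 {E : Type*} [NormedAddCommGroup E] [NormedSpace ℝ E]
    (F : E → E) (p : E) (A : E →L[ℝ] E) (hA : HasFDerivAt F A p)
    (hFp : F p = p)
    (x : ℕ → E) (hfix : ∀ k, F (x k) = x k) (hne : ∀ k, x k ≠ p)
    (hlim : Filter.Tendsto x Filter.atTop (nhds p))
    (v : E)
    (hdir : Filter.Tendsto (fun k => ‖x k - p‖⁻¹ • (x k - p))
      Filter.atTop (nhds v)) :
    ‖v‖ = 1 ∧ A v = v ∧ ∃ w : E, w ≠ 0 ∧ A w = (1 : ℝ) • w := by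
  have hnorm : ‖v‖ = 1 := by
    have h1 : Filter.Tendsto (fun k => ‖(fun k => ‖x k - p‖⁻¹ • (x k - p)) k‖)
        Filter.atTop (nhds ‖v‖) := hdir.norm
    have h2 : (fun k => ‖(fun k => ‖x k - p‖⁻¹ • (x k - p)) k‖) = fun _ => (1 : ℝ) := by
      funext k
      have hx : x k - p ≠ 0 := sub_ne_zero.mpr (hne k)
      simp [norm_smul, abs_of_nonneg (inv_nonneg.mpr (norm_nonneg _)),
        inv_mul_cancel₀ (norm_ne_zero_iff.mpr hx)]
    rw [h2] at h1
    exact tendsto_nhds_unique h1 tendsto_const_nhds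
  have ho := hA.isLittleO
  have ho2 : (fun k => x k - p - A (x k - p)) =o[Filter.atTop] fun k => x k - p := by
    have := ho.comp_tendsto hlim
    simpa [Function.comp_def, hfix, hFp, map_sub] using this
  have h0 : Filter.Tendsto (fun k => ‖x k - p‖⁻¹ • (x k - p - A (x k - p)))
      Filter.atTop (nhds 0) := ho2.norm_right.tendsto_inv_smul_nhds_zero
  have hAv : Filter.Tendsto (fun k => A (‖x k - p‖⁻¹ • (x k - p)))
      Filter.atTop (nhds (A v)) := A.continuous.continuousAt.tendsto.comp hdir
  have hdiff : Filter.Tendsto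
      (fun k => ‖x k - p‖⁻¹ • (x k - p) - A (‖x k - p‖⁻¹ • (x k - p)))
      Filter.atTop (nhds (v - A v)) := hdir.sub hAv
  have heq : (fun k => ‖x k - p‖⁻¹ • (x k - p) - A (‖x k - p‖⁻¹ • (x k - p)))
      = fun k => ‖x k - p‖⁻¹ • (x k - p - A (x k - p)) := by
    funext k; simp [smul_sub, A.map_smul]
  rw [heq] at hdiff
  have hvA : v - A v = 0 := tendsto_nhds_unique hdiff h0
  have hAvv : A v = v := (sub_eq_zero.mp hvA).symm
  have hv0 : v ≠ 0 := by
    intro h; rw [h, norm_zero] at hnorm; norm_num at hnorm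
  exact ⟨hnorm, hAvv, v, hv0, by simp [hAvv]⟩
end
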